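/- Let a > 0 and n be a positive integer, let L_Φ = a·n·(2n−1)·2^{2n−2} be the Lipschitz constant of the flux Φ_{a,n} on [0,2], and let W̃ = (w̃_{iℓ}) be an N×N matrix with all entries positive and with identical rows, i.e. w̃_{j,ℓ} = w̃_{i,ℓ} for all 1 ≤ i, j, ℓ ≤ N. Suppose v^k ∈ (0,1)^N has pairwise distinct entries, 0 < v^k_i < v^k_j < 1 for some indices i, j, and the time step size satisfies 0 < τ < 1 / (2·L_Φ·max_{1≤i≤N} Σ_{ℓ=1}^N w̃_{iℓ}). Then the explicit scheme v^{k+1}_m = v^k_m + τ·[ Σ_{ℓ ≠ m} w̃_{m,ℓ}·Φ_{a,n}(v^k_ℓ − v^k_m) − Σ_{ℓ=1}^N w̃_{m,ℓ}·Φ_{a,n}(v^k_ℓ + v^k_m) ] satisfies v^{k+1}_i < v^{k+1}_j; i.e., the rank-order of the positions is preserved. -/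

import Mathlib

/-!
On each of its two branches the flux is a rescaled odd power, hence Lipschitz with constant
`L_Φ` on the relevant interval, and at `0` it jumps *down* (from `a n` to `-a n`). Hence
`Φ y - Φ x ≤ L_Φ (y - x)` for all `x ≤ y` in `[-2, 2]`. Since the rows of `W̃` coincide, both
updates use the same weights `w`, and comparing the updates of `vᵢ < vⱼ` term by term gives
`Fⱼ - Fᵢ ≥ -2 L_Φ (∑ w) (vⱼ - vᵢ)` for the brackets `F` of the scheme; the self-interaction terms
`l = i, j` have the favourable sign because `Φ > 0` on `(-1, 0)` and `Φ < 0` on `[0, 1)`.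
The step size condition then makes `vⱼ - vᵢ + τ (Fⱼ - Fᵢ)` positive.
-/

/-- Flux `Φ_{a,n}(s) = a·n·(s−1)^(2n−1)` for `s ≥ 0`, extended by
`Φ_{a,n}(s) = a·n·(s+1)^(2n−1)` for `s < 0`. -/
noncomputable def flux (a : ℝ) (n : ℕ) (s : ℝ) : ℝ :=
  if 0 ≤ s then a * n * (s - 1) ^ (2 * n - 1) else a * n * (s + 1) ^ (2 * n - 1)

/-- Lipschitz constant `L_Φ = a·n·(2n−1)·2^(2n−2)` of the flux `Φ_{a,n}` on `[0,2]`. -/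
noncomputable def LPhi (a : ℝ) (n : ℕ) : ℝ :=
  a * n * ((2 * n - 1 : ℕ) : ℝ) * (2 : ℝ) ^ (2 * n - 2)

open Finset

section Flux

variable {a : ℝ} {n : ℕ}

lemma mul_pow_sub_mul_pow_le_LPhi (ha : 0 ≤ a) {u v : ℝ} (hu : |u| ≤ 1) (hv : |v| ≤ 1) :
    a * n * u ^ (2 * n - 1) - a * n * v ^ (2 * n - 1) ≤ LPhi a n * |u - v| := by
  have hpow : |u ^ (2 * n - 1) - v ^ (2 * n - 1)| ≤ |u - v| * ((2 * n - 1 : ℕ) : ℝ) :=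
    (abs_pow_sub_pow_le u v _).trans <|
      mul_le_of_le_one_right (by positivity) (pow_le_one₀ (by positivity) (max_le hu hv))
  have htwo : (1 : ℝ) ≤ 2 ^ (2 * n - 2) := one_le_pow₀ (by norm_num)
  calc a * n * u ^ (2 * n - 1) - a * n * v ^ (2 * n - 1)
      ≤ a * n * |u ^ (2 * n - 1) - v ^ (2 * n - 1)| := by
        rw [← mul_sub]; exact mul_le_mul_of_nonneg_left (le_abs_self _) (by positivity)
    _ ≤ a * n * (|u - v| * ((2 * n - 1 : ℕ) : ℝ)) * 2 ^ (2 * n - 2) := by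
        exact (mul_le_mul_of_nonneg_left hpow (by positivity)).trans
          (le_mul_of_one_le_right (by positivity) htwo)
    _ = LPhi a n * |u - v| := by unfold LPhi; ring

/-- The jump of the flux at `0` is downward, so the Lipschitz bound of the two branches
survives across it in this one-sided form. -/
lemma flux_sub_flux_le (ha : 0 ≤ a) {x y : ℝ} (hxy : x ≤ y) (hx : -2 ≤ x) (hy : y ≤ 2) :
    flux a n y - flux a n x ≤ LPhi a n * (y - x) := by
  have hunit {u : ℝ} (h₁ : -1 ≤ u) (h₂ : u ≤ 1) : |u| ≤ 1 := abs_le.2 ⟨h₁, h₂⟩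
  unfold flux
  by_cases hx0 : 0 ≤ x
  · rw [if_pos hx0, if_pos (hx0.trans hxy)]
    have := mul_pow_sub_mul_pow_le_LPhi (n := n) ha (u := y - 1) (v := x - 1)
      (hunit (by linarith) (by linarith)) (hunit (by linarith) (by linarith))
    rwa [sub_sub_sub_cancel_right, abs_of_nonneg (by linarith)] at this
  by_cases hy0 : 0 ≤ y
  · rw [if_pos hy0, if_neg hx0]
    have hright := mul_pow_sub_mul_pow_le_LPhi (n := n) ha (u := y - 1) (v := -1)
      (hunit (by linarith) (by linarith)) (by simp)
    have hleft := mul_pow_sub_mul_pow_le_LPhi (n := n) ha (u := 1) (v := x + 1)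
      (by simp) (hunit (by linarith) (by linarith))
    have hjump : a * n * (-1 : ℝ) ^ (2 * n - 1) ≤ a * n * 1 ^ (2 * n - 1) := by
      refine mul_le_mul_of_nonneg_left ?_ (by positivity)
      rw [one_pow]; exact (le_abs_self _).trans (by simp)
    rw [show y - 1 - -1 = y by ring, abs_of_nonneg hy0] at hright
    rw [show 1 - (x + 1) = -x by ring, abs_of_nonneg (by linarith)] at hleft
    linarith
  · rw [if_neg hy0, if_neg hx0]
    have := mul_pow_sub_mul_pow_le_LPhi (n := n) ha (u := y + 1) (v := x + 1)
      (hunit (by linarith) (by linarith)) (hunit (by linarith) (by linarith))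
    rwa [add_sub_add_right_eq_sub, abs_of_nonneg (by linarith)] at this

lemma LPhi_nonneg (ha : 0 ≤ a) : 0 ≤ LPhi a n := by
  unfold LPhi; positivity

lemma flux_nonneg_of_neg (ha : 0 ≤ a) {x : ℝ} (hx : -1 ≤ x) (hx0 : x < 0) : 0 ≤ flux a n x := by
  rw [flux, if_neg hx0.not_ge]
  have : 0 ≤ x + 1 := by linarith
  positivity

lemma flux_nonpos_of_nonneg (ha : 0 ≤ a) (hn : 0 < n) {x : ℝ} (hx0 : 0 ≤ x) (hx1 : x ≤ 1) :
    flux a n x ≤ 0 := by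
  rw [flux, if_pos hx0]
  exact mul_nonpos_of_nonneg_of_nonpos (by positivity)
    (Odd.pow_nonpos ⟨n - 1, by omega⟩ (by linarith))

end Flux

section Scheme

variable {ι : Type*} [Fintype ι] {a : ℝ} {n : ℕ} {w v : ι → ℝ} {i j : ι}

lemma sum_flux_add_sub_le (ha : 0 ≤ a) (hw : ∀ l, 0 ≤ w l) (hv : ∀ l, v l ∈ Set.Icc (0 : ℝ) 1)
    (hij : v i ≤ v j) :
    ∑ l, w l * flux a n (v l + v j) - ∑ l, w l * flux a n (v l + v i) ≤
      LPhi a n * (v j - v i) * ∑ l, w l := by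
  rw [← sum_sub_distrib, mul_sum]
  gcongr with l
  have := flux_sub_flux_le (n := n) ha (by linarith : v l + v i ≤ v l + v j)
    (by linarith [(hv l).1, (hv i).1]) (by linarith [(hv l).2, (hv j).2])
  rw [add_sub_add_left_eq_sub] at this
  rw [← mul_sub, mul_comm]
  exact mul_le_mul_of_nonneg_right this (hw l)

variable [DecidableEq ι]

/-- The bracket of the scheme at the node `m`; `w` is the common row of `W̃`. -/
noncomputable def interaction (a : ℝ) (n : ℕ) (w v : ι → ℝ) (m : ι) : ℝ :=
  (∑ l ∈ univ.erase m, w l * flux a n (v l - v m)) - ∑ l, w l * flux a n (v l + v m)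

lemma sum_erase_flux_sub_ge (ha : 0 ≤ a) (hn : 0 < n) (hw : ∀ l, 0 ≤ w l)
    (hv : ∀ l, v l ∈ Set.Icc (0 : ℝ) 1) (hij : v i < v j) :
    -(LPhi a n * (v j - v i) * ∑ l, w l) ≤
      (∑ l ∈ univ.erase j, w l * flux a n (v l - v j)) -
        ∑ l ∈ univ.erase i, w l * flux a n (v l - v i) := by
  have hL : 0 ≤ LPhi a n * (v j - v i) := mul_nonneg (LPhi_nonneg ha) (by linarith)
  rw [← filter_ne', ← filter_ne', sum_filter, sum_filter, ← sum_sub_distrib, mul_sum,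
    ← sum_neg_distrib]
  gcongr with l
  obtain ⟨hvl₀, hvl₁⟩ := hv l
  by_cases hli : l = i
  · subst hli
    have : 0 ≤ flux a n (v l - v j) := flux_nonneg_of_neg ha (by linarith [(hv j).2]) (by linarith)
    simp only [ne_eq, ne_of_apply_ne v hij.ne, not_false_eq_true, if_true, not_true_eq_false,
      if_false, sub_zero]
    nlinarith [hw l]
  by_cases hlj : l = j
  · subst hlj
    have : flux a n (v l - v i) ≤ 0 :=
      flux_nonpos_of_nonneg ha hn (by linarith) (by linarith [(hv i).1])
    simp only [ne_eq, hli, not_false_eq_true, if_true, not_true_eq_false, if_false, zero_sub]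
    nlinarith [hw l]
  · have := flux_sub_flux_le (n := n) ha (sub_le_sub_left hij.le (v l))
      (by linarith [(hv j).2]) (by linarith [(hv i).1])
    rw [sub_sub_sub_cancel_left] at this
    simp only [ne_eq, hli, hlj, not_false_eq_true, if_true]
    nlinarith [hw l]

lemma interaction_sub_ge (ha : 0 ≤ a) (hn : 0 < n) (hw : ∀ l, 0 ≤ w l)
    (hv : ∀ l, v l ∈ Set.Icc (0 : ℝ) 1) (hij : v i < v j) :
    -(2 * LPhi a n * (∑ l, w l) * (v j - v i)) ≤ interaction a n w v j - interaction a n w v i := by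
  have herase := sum_erase_flux_sub_ge ha hn hw hv hij
  have hadd := sum_flux_add_sub_le (n := n) ha hw hv hij.le
  unfold interaction
  linarith

end Scheme

theorem stmt16_general (a : ℝ) (ha : 0 < a) (n : ℕ) (hn : 0 < n) (N : ℕ)
    (W : Matrix (Fin N) (Fin N) ℝ)
    (hpos : ∀ i l, 0 < W i l) (hrows : ∀ i j l, W j l = W i l)
    (τ : ℝ) (vk vk1 : Fin N → ℝ)
    (hrange : ∀ m, vk m ∈ Set.Ioo (0 : ℝ) 1)
    (i j : Fin N) (hij : vk i < vk j)
    (hτ0 : 0 < τ) (hτ : τ < 1 / (2 * LPhi a n * ⨆ m, ∑ l, W m l))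
    (hscheme : ∀ m, vk1 m = vk m + τ *
      ((∑ l ∈ Finset.univ.erase m, W m l * flux a n (vk l - vk m)) -
        ∑ l, W m l * flux a n (vk l + vk m))) :
    vk1 i < vk1 j := by
  have hrow (m : Fin N) : W m = W i := funext (hrows i m)
  have hstep (m : Fin N) : vk1 m = vk m + τ * interaction a n (W i) vk m := by
    rw [hscheme m, hrow m]; rfl
  have hstepsize : τ * (2 * LPhi a n * ∑ l, W i l) < 1 := by
    have : Nonempty (Fin N) := ⟨i⟩
    simp only [hrow, ciSup_const] at hτ
    rwa [lt_div_iff₀ (one_div_pos.1 (hτ0.trans hτ))] at hτ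
  have hforce := interaction_sub_ge ha.le hn (fun l => (hpos i l).le)
    (fun m => Set.Ioo_subset_Icc_self (hrange m)) hij
  rw [hstep i, hstep j]
  nlinarith [mul_le_mul_of_nonneg_left hforce hτ0.le, mul_pos (sub_pos.2 hij) (sub_pos.2 hstepsize)]

/-- Rank-order preservation of the explicit scheme: for a weight matrix with
positive entries and identical rows, pairwise distinct values `vᵏ ∈ (0,1)^N` with
`vᵏᵢ < vᵏⱼ`, and `0 < τ < 1/(2·L_Φ·maxᵢ Σₗ w̃ᵢₗ)`, the explicit time step preserves the
order: `vᵏ⁺¹ᵢ < vᵏ⁺¹ⱼ`. -/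
theorem stmt16 (a : ℝ) (ha : 0 < a) (n : ℕ) (hn : 0 < n) (N : ℕ) (hN : 1 ≤ N)
    (W : Matrix (Fin N) (Fin N) ℝ)
    (hpos : ∀ i l, 0 < W i l) (hrows : ∀ i j l, W j l = W i l)
    (τ : ℝ) (vk vk1 : Fin N → ℝ)
    (hdist : ∀ i j, i ≠ j → vk i ≠ vk j)
    (hrange : ∀ m, vk m ∈ Set.Ioo (0 : ℝ) 1)
    (i j : Fin N) (hij : vk i < vk j)
    (hτ0 : 0 < τ) (hτ : τ < 1 / (2 * LPhi a n * ⨆ m, ∑ l, W m l))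
    (hscheme : ∀ m, vk1 m = vk m + τ *
      ((∑ l ∈ Finset.univ.erase m, W m l * flux a n (vk l - vk m)) -
        ∑ l, W m l * flux a n (vk l + vk m))) :
    vk1 i < vk1 j :=
  stmt16_general a ha n hn N W hpos hrows τ vk vk1 hrange i j hij hτ0 hτ hscheme
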